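/- Let X be a complete CAT(0) space with basepoint x₀, and let D ⊆ D' be two strict star domains in (X, x₀) (closed bounded sets, distinct from {x₀}, such that for each point x in the set other than x₀ the geodesic [x₀,x] is contained in the set and [x₀,x) in its interior). Assume ∂D and ∂D' are compact. Then the geodesic projection g : ∂D' → ∂D, which sends x' ∈ ∂D' to the unique point of ∂D on the geodesic [x₀, x'], is continuous. -/

import Mathlib

open Set Filter Topology

/-- A uniquely geodesic metric space with convex metric (the relevant structure of a
CAT(0) space). -/
structure GeodesicCAT0 (X : Type*) [MetricSpace X] where
  γ : X → X → ℝ → X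
  γ_zero : ∀ x y, γ x y 0 = x
  γ_one : ∀ x y, γ x y 1 = y
  γ_dist : ∀ x y, ∀ s ∈ Set.Icc (0:ℝ) 1, ∀ t ∈ Set.Icc (0:ℝ) 1,
    dist (γ x y s) (γ x y t) = |s - t| * dist x y
  unique : ∀ x y (c : ℝ → X), c 0 = x → c 1 = y →
    (∀ s ∈ Set.Icc (0:ℝ) 1, ∀ t ∈ Set.Icc (0:ℝ) 1,
      dist (c s) (c t) = |s - t| * dist x y) →
    ∀ t ∈ Set.Icc (0:ℝ) 1, c t = γ x y t
  convex : ∀ x y y', ∀ t ∈ Set.Icc (0:ℝ) 1, dist (γ x y t) (γ x y' t) ≤ t * dist y y'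

/-- A strict star domain in `(X, x₀)`. -/
def IsStrictStar {X : Type*} [MetricSpace X] (g : GeodesicCAT0 X) (x₀ : X)
    (D : Set X) : Prop :=
  IsClosed D ∧ Bornology.IsBounded D ∧ x₀ ∈ D ∧ D ≠ {x₀} ∧
  ∀ x ∈ D, x ≠ x₀ →
    g.γ x₀ x '' Set.Icc (0:ℝ) 1 ⊆ D ∧ g.γ x₀ x '' Set.Ico (0:ℝ) 1 ⊆ interior D

/-! The point of `∂D` on `[x₀, x']` is `γ x₀ x' (τ x')` for a parameter `τ x' ∈ [0, 1]`, so it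
suffices that `τ` is continuous. Since geodesics depend continuously on their endpoints and
parameter, the graph of `τ` is the closed set of pairs `(x', t)` with `γ x₀ x' t ∈ ∂D`: the
strict star property makes this parameter unique, as a point of `D` strictly before a point of
`D \ {x₀}` on a geodesic from `x₀` is interior. A map into the compact interval with closed
graph is continuous. -/

theorem continuous_of_isClosed_graph {X Y : Type*} [TopologicalSpace X] [TopologicalSpace Y]
    [CompactSpace Y] {f : X → Y} (hf : IsClosed {p : X × Y | p.2 = f p.1}) : Continuous f := by
  refine continuous_iff_isClosed.2 fun C hC => ?_
  have hpre : f ⁻¹' C = Prod.fst '' ({p : X × Y | p.2 = f p.1} ∩ univ ×ˢ C) := by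
    ext x
    exact ⟨fun hx => ⟨(x, f x), ⟨rfl, trivial, hx⟩, rfl⟩,
      by rintro ⟨⟨x, y⟩, ⟨rfl : y = f x, -, hy⟩, rfl⟩; exact hy⟩
  rw [hpre]
  exact isClosedMap_fst_of_compactSpace _ (hf.inter (isClosed_univ.prod hC))

namespace GeodesicCAT0

variable {X : Type*} [MetricSpace X] (g : GeodesicCAT0 X)

theorem dist_γ_left (x y : X) {t : ℝ} (ht : t ∈ Icc (0 : ℝ) 1) :
    dist x (g.γ x y t) = t * dist x y := by
  have h := g.γ_dist x y 0 ⟨le_rfl, zero_le_one⟩ t ht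
  rwa [g.γ_zero, zero_sub, abs_neg, abs_of_nonneg ht.1] at h

theorem γ_γ (x y : X) {t u : ℝ} (ht : t ∈ Icc (0 : ℝ) 1) (hu : u ∈ Icc (0 : ℝ) 1) :
    g.γ x (g.γ x y t) u = g.γ x y (u * t) := by
  have hmem : ∀ v ∈ Icc (0 : ℝ) 1, v * t ∈ Icc (0 : ℝ) 1 := fun v hv =>
    ⟨mul_nonneg hv.1 ht.1, mul_le_one₀ hv.2 ht.1 ht.2⟩
  refine (g.unique x (g.γ x y t) (fun v => g.γ x y (v * t)) (by simp [g.γ_zero])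
    (by simp) (fun v hv w hw => ?_) u hu).symm
  rw [g.γ_dist x y _ (hmem v hv) _ (hmem w hw), g.dist_γ_left x y ht, ← sub_mul, abs_mul,
    abs_of_nonneg ht.1, mul_assoc]

theorem dist_γ_γ_le (x₀ x y : X) {s t : ℝ} (hs : s ∈ Icc (0 : ℝ) 1) (ht : t ∈ Icc (0 : ℝ) 1) :
    dist (g.γ x₀ y t) (g.γ x₀ x s) ≤ dist y x + |t - s| * dist x₀ x :=
  calc dist (g.γ x₀ y t) (g.γ x₀ x s)
      ≤ dist (g.γ x₀ y t) (g.γ x₀ x t) + dist (g.γ x₀ x t) (g.γ x₀ x s) := dist_triangle _ _ _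
    _ ≤ t * dist y x + |t - s| * dist x₀ x := by
      gcongr
      · exact g.convex x₀ y x t ht
      · exact (g.γ_dist x₀ x t ht s hs).le
    _ ≤ dist y x + |t - s| * dist x₀ x := by
      gcongr
      exact mul_le_of_le_one_left dist_nonneg ht.2

theorem continuous_γ (x₀ : X) : Continuous fun p : X × Icc (0 : ℝ) 1 => g.γ x₀ p.1 p.2 := by
  refine continuous_iff_continuousAt.2 fun ⟨x, s⟩ => ?_
  have hbound : Tendsto (fun p : X × Icc (0 : ℝ) 1 => dist p.1 x + |(p.2 : ℝ) - s| * dist x₀ x)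
      (𝓝 (x, s)) (𝓝 0) := by
    have hcont : Continuous fun p : X × Icc (0 : ℝ) 1 =>
        dist p.1 x + |(p.2 : ℝ) - s| * dist x₀ x := by fun_prop
    simpa using hcont.tendsto (x, s)
  exact tendsto_iff_dist_tendsto_zero.2 <| squeeze_zero (fun _ => dist_nonneg)
    (fun p => g.dist_γ_γ_le x₀ x p.1 s.2 p.2.2) hbound

end GeodesicCAT0

namespace IsStrictStar

variable {X : Type*} [MetricSpace X] {g : GeodesicCAT0 X} {x₀ : X} {D : Set X}

theorem base_mem_interior (hD : IsStrictStar g x₀ D) : x₀ ∈ interior D := by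
  obtain ⟨-, -, hx₀, hne, hstar⟩ := hD
  obtain ⟨x, hx, hxx₀⟩ : ∃ x ∈ D, x ≠ x₀ := by
    by_contra! h
    exact hne (Subset.antisymm h (singleton_subset_iff.2 hx₀))
  exact (hstar x hx hxx₀).2 ⟨0, ⟨le_rfl, zero_lt_one⟩, g.γ_zero _ _⟩

theorem γ_mem_interior (hD : IsStrictStar g x₀ D) (x : X) {s t : ℝ} (hs : 0 ≤ s) (hst : s < t)
    (ht : t ≤ 1) (hmem : g.γ x₀ x t ∈ D) (hne : g.γ x₀ x t ≠ x₀) :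
    g.γ x₀ x s ∈ interior D := by
  have ht₀ : 0 < t := hs.trans_lt hst
  have hu : s / t ∈ Ico (0 : ℝ) 1 := ⟨div_nonneg hs ht₀.le, (div_lt_one ht₀).2 hst⟩
  have hγ : g.γ x₀ (g.γ x₀ x t) (s / t) = g.γ x₀ x s := by
    rw [g.γ_γ x₀ x ⟨ht₀.le, ht⟩ ⟨hu.1, hu.2.le⟩, div_mul_cancel₀ s ht₀.ne']
  exact hγ ▸ (hD.2.2.2.2 _ hmem hne).2 ⟨s / t, hu, rfl⟩

theorem eq_of_γ_mem_frontier (hD : IsStrictStar g x₀ D) (x : X) {s t : ℝ}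
    (hs : s ∈ Icc (0 : ℝ) 1) (ht : t ∈ Icc (0 : ℝ) 1)
    (hfs : g.γ x₀ x s ∈ frontier D) (hft : g.γ x₀ x t ∈ frontier D) : s = t := by
  have hnlt : ∀ {a b : ℝ}, a ∈ Icc (0 : ℝ) 1 → b ∈ Icc (0 : ℝ) 1 →
      g.γ x₀ x a ∈ frontier D → g.γ x₀ x b ∈ frontier D → ¬ a < b := by
    intro a b ha hb hfa hfb hab
    have hne : g.γ x₀ x b ≠ x₀ := fun h => hfb.2 (by rw [h]; exact hD.base_mem_interior)
    exact hfa.2 (hD.γ_mem_interior x ha.1 hab hb.2 (hD.1.frontier_subset hfb) hne)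
  exact le_antisymm (not_lt.1 (hnlt ht hs hft hfs)) (not_lt.1 (hnlt hs ht hfs hft))

end IsStrictStar

theorem stmt11_general {X : Type*} [MetricSpace X] (g : GeodesicCAT0 X)
    (x₀ : X) (D D' : Set X) (hD : IsStrictStar g x₀ D)
    (gproj : X → X)
    (hg : ∀ x' ∈ frontier D',
      gproj x' ∈ frontier D ∧ gproj x' ∈ g.γ x₀ x' '' Set.Icc (0:ℝ) 1) :
    ContinuousOn gproj (frontier D') := by
  choose! τ hτ hτγ using fun x hx => (hg x hx).2
  let T : frontier D' → Icc (0 : ℝ) 1 := fun x => ⟨τ x, hτ x x.2⟩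
  have hΓ : Continuous fun p : frontier D' × Icc (0 : ℝ) 1 => g.γ x₀ p.1 p.2 :=
    (g.continuous_γ x₀).comp (continuous_subtype_val.prodMap continuous_id)
  have hgraph : {p : frontier D' × Icc (0 : ℝ) 1 | p.2 = T p.1} =
      (fun p : frontier D' × Icc (0 : ℝ) 1 => g.γ x₀ p.1 p.2) ⁻¹' frontier D := by
    ext ⟨x, t⟩
    have hx := (hg x x.2).1
    rw [← hτγ x x.2] at hx
    exact ⟨by rintro (rfl : t = T x); exact hx,
      fun ht => Subtype.ext (hD.eq_of_γ_mem_frontier x t.2 (hτ x x.2) ht hx)⟩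
  have hT : Continuous T :=
    continuous_of_isClosed_graph (hgraph ▸ isClosed_frontier.preimage hΓ)
  rw [continuousOn_iff_continuous_domRestrict]
  have hrestrict : (frontier D').domRestrict gproj = fun x : frontier D' => g.γ x₀ x (T x) :=
    funext fun x => (hτγ x x.2).symm
  rw [hrestrict]
  exact (g.continuous_γ x₀).comp (continuous_subtype_val.prodMk hT)

/-- Lemma 7.4: for nested strict star domains `D ⊆ D'` in a complete CAT(0) space
with compact boundaries, the geodesic projection `∂D' → ∂D` (which sends `x'` to the
point of `∂D` on the geodesic `[x₀, x']`) is continuous. -/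
theorem stmt11 {X : Type*} [MetricSpace X] [CompleteSpace X] (g : GeodesicCAT0 X)
    (x₀ : X) (D D' : Set X) (hD : IsStrictStar g x₀ D) (hD' : IsStrictStar g x₀ D')
    (hsub : D ⊆ D') (hbd : IsCompact (frontier D)) (hbd' : IsCompact (frontier D'))
    (gproj : X → X)
    (hg : ∀ x' ∈ frontier D',
      gproj x' ∈ frontier D ∧ gproj x' ∈ g.γ x₀ x' '' Set.Icc (0:ℝ) 1) :
    ContinuousOn gproj (frontier D') :=
  stmt11_general g x₀ D D' hD gproj hg
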